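/- arXiv:solv-int/9909006 — 2 statements merged into one kernel-verified Lean document; each statement's English description precedes it below -/
import Mathlib

section
/- Assume a_1 ≠ 0, let b ∈ ℝ, and let H̃ = e^{q_2−q_1}(H+b). Define the transformed monodromy matrix T̃ = T_1·M·T_3, where M = [[λ−p_2, a_2e^{q_2}],[−e^{−q_2}(1 − H̃/a_1), 0]] and T_1, T_3 are the Toda local Lax matrices. Then det T̃ = (a_1 − H̃)·a_2a_3, and tr T̃ = tr(T_1T_2T_3) + (H+b)(λ−p_3); in particular, as a polynomial in λ, the coefficient of λ in tr T̃ equals P²/2 + b, where P = p_1+p_2+p_3. -/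
open Real Matrix

/-- The periodic three-particle Toda Hamiltonian. -/
noncomputable def todaH (a1 a2 a3 : ℝ) (p q : Fin 3 → ℝ) : ℝ :=
  (1 / 2) * ((p 0) ^ 2 + (p 1) ^ 2 + (p 2) ^ 2)
    + a1 * exp (q 0 - q 1) + a2 * exp (q 1 - q 2)
    + a3 * exp (q 2 - q 0)

/-- The `2×2` local Lax matrix `T_j = [[λ−p_j, a_j e^{q_j}],[−e^{−q_j}, 0]]`. -/
noncomputable def todaT (a pj qj lam : ℝ) : Matrix (Fin 2) (Fin 2) ℝ :=
  !![lam - pj, a * exp qj;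
     -exp (-qj), 0]

/-!
The modified middle factor differs from the Lax matrix `T₂` only in its lower-left
entry: `M = T₂ + (e^{-q₂} H̃ / a₁) E₂₁`. Hence `det T̃ = a₁ · a₂(1 − H̃/a₁) · a₃`, and by
cyclicity of the trace the correction contributes `(e^{-q₂} H̃ / a₁) (T₃T₁)₁₂
= e^{q₁-q₂} H̃ (λ − p₃) = (H + b)(λ − p₃)` to `tr T̃`. The `λ`-coefficient of `tr(T₁T₂T₃)` is
`∑_{i<j} p_i p_j` minus the Toda potential; adding `H + b` leaves `P²/2 + b`.
-/

theorem Matrix.trace_mul_single_mul {l m n R : Type*} [Fintype l] [Fintype m] [Fintype n]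
    [DecidableEq m] [DecidableEq n] [CommSemiring R]
    (A : Matrix l m R) (B : Matrix n l R) (i : m) (j : n) (c : R) :
    (A * single i j c * B).trace = c * (B * A) j i := by
  rw [Matrix.mul_assoc, trace_mul_comm, Matrix.mul_assoc, trace_single_mul, smul_eq_mul]

theorem det_todaT (a pj qj lam : ℝ) : (todaT a pj qj lam).det = a := by
  simp [todaT, det_fin_two_of, mul_assoc, ← Real.exp_add]

theorem todaT_mul_todaT_apply_zero_one (a pj qj a' pj' qj' lam : ℝ) :
    (todaT a' pj' qj' lam * todaT a pj qj lam) 0 1 = (lam - pj') * (a * exp qj) := by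
  simp [todaT]

theorem trace_todaT_mul_todaT_mul_todaT (a1 a2 a3 p0 p1 p2 q0 q1 q2 lam : ℝ) :
    (todaT a1 p0 q0 lam * todaT a2 p1 q1 lam * todaT a3 p2 q2 lam).trace =
      lam ^ 3 - (p0 + p1 + p2) * lam ^ 2
        + (p0 * p1 + p0 * p2 + p1 * p2
            - a1 * exp (q0 - q1) - a2 * exp (q1 - q2) - a3 * exp (q2 - q0)) * lam
        + (a1 * exp (q0 - q1) * p2 + a2 * exp (q1 - q2) * p0 + a3 * exp (q2 - q0) * p1
            - p0 * p1 * p2) := by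
  simp only [todaT, mul_fin_two, trace_fin_two_of, sub_eq_add_neg q0, sub_eq_add_neg q1,
    sub_eq_add_neg q2, Real.exp_add]
  ring

theorem todaT_add_single_one_zero (a pj qj t lam : ℝ) :
    todaT a pj qj lam + single 1 0 (exp (-qj) * t) =
      !![lam - pj, a * exp qj; -exp (-qj) * (1 - t), 0] := by
  ext i j
  fin_cases i <;> fin_cases j <;> simp [todaT, mul_sub]

/-- with `H̃ = e^{q₂−q₁}(H+b)` and the transformed monodromy
matrix `T̃ = T₁·M·T₃`, `M = [[λ−p₂, a₂e^{q₂}],[−e^{−q₂}(1 − H̃/a₁), 0]]`, one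
has `det T̃ = (a₁−H̃)a₂a₃`, `tr T̃ = tr(T₁T₂T₃) + (H+b)(λ−p₃)`, and the
coefficient of `λ` in `tr T̃` is `P²/2 + b`. -/
theorem stmt_16 (a1 a2 a3 b : ℝ) (ha1 : a1 ≠ 0) (p q : Fin 3 → ℝ)
    (H Ht : ℝ)
    (hH : H = todaH a1 a2 a3 p q)
    (hHt : Ht = exp (q 1 - q 0) * (H + b))
    (M : ℝ → Matrix (Fin 2) (Fin 2) ℝ)
    (hM : ∀ lam, M lam = !![lam - p 1, a2 * exp (q 1);
                            -exp (-(q 1)) * (1 - Ht / a1), 0])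
    (Tt : ℝ → Matrix (Fin 2) (Fin 2) ℝ)
    (hTt : ∀ lam, Tt lam =
      todaT a1 (p 0) (q 0) lam * M lam * todaT a3 (p 2) (q 2) lam) :
    (∀ lam : ℝ, (Tt lam).det = (a1 - Ht) * a2 * a3) ∧
    (∀ lam : ℝ, (Tt lam).trace =
      (todaT a1 (p 0) (q 0) lam * todaT a2 (p 1) (q 1) lam *
          todaT a3 (p 2) (q 2) lam).trace + (H + b) * (lam - p 2)) ∧
    (∃ c2 c0 : ℝ, ∀ lam : ℝ,
      (Tt lam).trace =
        lam ^ 3 + c2 * lam ^ 2 + ((p 0 + p 1 + p 2) ^ 2 / 2 + b) * lam + c0) := by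
  have hTt_split : ∀ lam, Tt lam =
      todaT a1 (p 0) (q 0) lam * todaT a2 (p 1) (q 1) lam * todaT a3 (p 2) (q 2) lam +
        todaT a1 (p 0) (q 0) lam * single 1 0 (exp (-q 1) * (Ht / a1)) *
          todaT a3 (p 2) (q 2) lam := fun lam => by
    rw [hTt, hM, ← todaT_add_single_one_zero, Matrix.mul_add, Matrix.add_mul]
  have htrace : ∀ lam : ℝ, (Tt lam).trace =
      (todaT a1 (p 0) (q 0) lam * todaT a2 (p 1) (q 1) lam *
          todaT a3 (p 2) (q 2) lam).trace + (H + b) * (lam - p 2) := fun lam => by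
    rw [hTt_split, trace_add, trace_mul_single_mul, todaT_mul_todaT_apply_zero_one, hHt,
      Real.exp_sub, Real.exp_neg]
    field_simp
  refine ⟨fun lam => ?_, htrace, ?_⟩
  · rw [hTt, det_mul, det_mul, det_todaT, det_todaT, hM, det_fin_two_of, Real.exp_neg]
    field_simp
    ring
  · refine ⟨-(p 0 + p 1 + p 2), a1 * exp (q 0 - q 1) * p 2 + a2 * exp (q 1 - q 2) * p 0
      + a3 * exp (q 2 - q 0) * p 1 - p 0 * p 1 * p 2 - (H + b) * p 2, fun lam => ?_⟩
    rw [htrace, trace_todaT_mul_todaT_mul_todaT, hH, todaH]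
    ring
end

section
/- Work in canonical polar coordinates (p_r, r, p_φ, φ) on {r > 0} with canonical Poisson bracket {f,g} = ∂f/∂p_r·∂g/∂r − ∂f/∂r·∂g/∂p_r + ∂f/∂p_φ·∂g/∂φ − ∂f/∂φ·∂g/∂p_φ. Fix real constants a, b, c, k, n, let f(r) = c·r^n, and define the shifted momenta p̃_r = p_r − c·r^{n−1}·cos(nφ) and p̃_φ = p_φ + c·r^n·sin(nφ). Let I_1 = p_r² + p_φ²/r² − a²r^{2k} + b, I_2 = p_φ, J_1 = p̃_r² + p̃_φ²/r², J_2 = p̃_φ. Then the differences are in involution: {I_1 − J_1, I_2 − J_2} = 0 at every point with r > 0. -/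
/-!
Both differences are at most affine in the momenta, and `I₂ − J₂ = −c rⁿ sin(nφ)` does not
depend on them at all. Hence the bracket only pairs the momentum gradient of `I₁ − J₁`,
`(2c r^{n−1} cos nφ, −2c r^{n−2} sin nφ)`, with the coordinate gradient of `I₂ − J₂`,
`−c n r^{n−1} (sin nφ, r cos nφ)`, and the two products cancel. Geometrically, for `n ≠ 0` the
shift is `p̃ = p − ∇S` with `S = (c/n) rⁿ cos(nφ)`, the bracket is `∂_φ (S_r² + S_φ²/r²)`, and
`S_r² + S_φ²/r² = c² r^{2n−2}` is rotation invariant.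
-/

open Real

/-- The canonical Poisson bracket in the coordinates
`(p, q) = ((p_r, p_φ), (r, φ))` on `(Fin 2 → ℝ) × (Fin 2 → ℝ)`:
`{f,g} = ∂f/∂p_r·∂g/∂r − ∂f/∂r·∂g/∂p_r + ∂f/∂p_φ·∂g/∂φ − ∂f/∂φ·∂g/∂p_φ`. -/
noncomputable def pbracket (f g : (Fin 2 → ℝ) × (Fin 2 → ℝ) → ℝ)
    (z : (Fin 2 → ℝ) × (Fin 2 → ℝ)) : ℝ :=
  ∑ i : Fin 2,
    (fderiv ℝ f z (Pi.single i 1, 0) * fderiv ℝ g z (0, Pi.single i 1)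
      - fderiv ℝ f z (0, Pi.single i 1) * fderiv ℝ g z (Pi.single i 1, 0))

theorem pbracket_comp_snd (f : (Fin 2 → ℝ) × (Fin 2 → ℝ) → ℝ) {h : (Fin 2 → ℝ) → ℝ}
    {z : (Fin 2 → ℝ) × (Fin 2 → ℝ)} (hh : DifferentiableAt ℝ h z.2) :
    pbracket f (fun w => h w.2) z =
      ∑ i, fderiv ℝ f z (Pi.single i 1, 0) * fderiv ℝ h z.2 (Pi.single i 1) := by
  have hg : fderiv ℝ (fun w : (Fin 2 → ℝ) × (Fin 2 → ℝ) => h w.2) z =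
      (fderiv ℝ h z.2).comp (ContinuousLinearMap.snd ℝ _ _) :=
    (hh.hasFDerivAt.comp z hasFDerivAt_snd).fderiv
  simp [pbracket, hg]

theorem fderiv_affine_in_momenta_apply {α : Fin 2 → (Fin 2 → ℝ) → ℝ} {β : (Fin 2 → ℝ) → ℝ}
    {z : (Fin 2 → ℝ) × (Fin 2 → ℝ)} (hα : ∀ i, DifferentiableAt ℝ (α i) z.2)
    (hβ : DifferentiableAt ℝ β z.2) (j : Fin 2) :
    fderiv ℝ (fun w : (Fin 2 → ℝ) × (Fin 2 → ℝ) => ∑ i, w.1 i * α i w.2 + β w.2) z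
      (Pi.single j 1, 0) = α j z.2 := by
  have hd : DifferentiableAt ℝ
      (fun w : (Fin 2 → ℝ) × (Fin 2 → ℝ) => ∑ i, w.1 i * α i w.2 + β w.2) z := by
    fun_prop
  rw [← hd.lineDeriv_eq_fderiv]
  simp only [lineDeriv, Prod.smul_mk, smul_zero, Prod.fst_add, Prod.snd_add, add_zero,
    Pi.add_apply, Pi.smul_apply, smul_eq_mul, Fin.sum_univ_two]
  fin_cases j <;> simp

theorem fderiv_mul_comp_apply {u v : ℝ → ℝ} {u' v' : ℝ} {q : Fin 2 → ℝ}
    (hu : HasDerivAt u u' (q 0)) (hv : HasDerivAt v v' (q 1)) :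
    fderiv ℝ (fun q : Fin 2 → ℝ => u (q 0) * v (q 1)) q (Pi.single 0 1) = u' * v (q 1) ∧
    fderiv ℝ (fun q : Fin 2 → ℝ => u (q 0) * v (q 1)) q (Pi.single 1 1) = u (q 0) * v' := by
  have h0 : HasFDerivAt (fun q : Fin 2 → ℝ => q 0) (ContinuousLinearMap.proj 0) q :=
    hasFDerivAt_apply (𝕜 := ℝ) 0 q
  have h1 : HasFDerivAt (fun q : Fin 2 → ℝ => q 1) (ContinuousLinearMap.proj 1) q :=
    hasFDerivAt_apply (𝕜 := ℝ) 1 q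
  have h : HasFDerivAt (fun q : Fin 2 → ℝ => u (q 0) * v (q 1)) _ q :=
    (hu.comp_hasFDerivAt (𝕜 := ℝ) q h0).mul (hv.comp_hasFDerivAt (𝕜 := ℝ) q h1)
  rw [h.fderiv]
  simp [mul_comm]

theorem pbracket_polar_shift_eq_zero (c n : ℝ) {β : (Fin 2 → ℝ) → ℝ}
    {z : (Fin 2 → ℝ) × (Fin 2 → ℝ)} (hr : z.2 0 ≠ 0) (hβ : DifferentiableAt ℝ β z.2) :
    pbracket
      (fun w => ∑ i, w.1 i * ![fun q => 2 * c * q 0 ^ (n - 1) * cos (n * q 1),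
        fun q => -2 * c * q 0 ^ n * sin (n * q 1) / q 0 ^ 2] i w.2 + β w.2)
      (fun w => -c * w.2 0 ^ n * sin (n * w.2 1)) z = 0 := by
  set α : Fin 2 → (Fin 2 → ℝ) → ℝ := ![fun q => 2 * c * q 0 ^ (n - 1) * cos (n * q 1),
    fun q => -2 * c * q 0 ^ n * sin (n * q 1) / q 0 ^ 2]
  set h : (Fin 2 → ℝ) → ℝ := fun q => -c * q 0 ^ n * sin (n * q 1)
  have hα : ∀ i, DifferentiableAt ℝ (α i) z.2 := by
    intro i
    fin_cases i <;> simp only [α, Fin.zero_eta, Fin.mk_one, Matrix.cons_val_zero,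
      Matrix.cons_val_one] <;> fun_prop (disch := simp [hr])
  have hh : DifferentiableAt ℝ h z.2 := by fun_prop (disch := simp [hr])
  obtain ⟨hh_r, hh_φ⟩ := fderiv_mul_comp_apply
    ((hasDerivAt_rpow_const (p := n) (Or.inl hr)).const_mul (-c))
    (((hasDerivAt_id' (z.2 1)).const_mul n).sin)
  rw [pbracket_comp_snd _ hh, Fin.sum_univ_two, fderiv_affine_in_momenta_apply hα hβ,
    fderiv_affine_in_momenta_apply hα hβ, hh_r, hh_φ]
  simp only [α, Matrix.cons_val_zero, Matrix.cons_val_one]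
  rw [rpow_sub_one hr]
  field_simp
  ring

/-- in polar canonical coordinates `(p_r, r, p_φ, φ)` (encoded as
`z = ((p_r, p_φ), (r, φ))`), with `f(r) = c·rⁿ`, shifted momenta
`p̃_r = p_r − c·r^{n−1}cos(nφ)`, `p̃_φ = p_φ + c·rⁿ·sin(nφ)`, and the integrals
`I₁ = p_r² + p_φ²/r² − a²r^{2k} + b`, `I₂ = p_φ`, `J₁ = p̃_r² + p̃_φ²/r²`,
`J₂ = p̃_φ`, the differences are in involution: `{I₁ − J₁, I₂ − J₂} = 0`
wherever `r > 0`. -/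
theorem stmt_18 (a b c k n : ℝ)
    (ptr ptphi I1 I2 J1 J2 : (Fin 2 → ℝ) × (Fin 2 → ℝ) → ℝ)
    (hptr : ∀ z, ptr z = z.1 0 - c * (z.2 0) ^ (n - 1) * cos (n * z.2 1))
    (hptphi : ∀ z, ptphi z = z.1 1 + c * (z.2 0) ^ n * sin (n * z.2 1))
    (hI1 : ∀ z, I1 z =
      (z.1 0) ^ 2 + (z.1 1) ^ 2 / (z.2 0) ^ 2 - a ^ 2 * (z.2 0) ^ (2 * k) + b)
    (hI2 : ∀ z, I2 z = z.1 1)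
    (hJ1 : ∀ z, J1 z = (ptr z) ^ 2 + (ptphi z) ^ 2 / (z.2 0) ^ 2)
    (hJ2 : ∀ z, J2 z = ptphi z) :
    ∀ z : (Fin 2 → ℝ) × (Fin 2 → ℝ), 0 < z.2 0 →
      pbracket (fun w => I1 w - J1 w) (fun w => I2 w - J2 w) z = 0 := by
  intro z hz
  set V : (Fin 2 → ℝ) → ℝ := fun q => -(c * q 0 ^ (n - 1) * cos (n * q 1)) ^ 2
    - (c * q 0 ^ n * sin (n * q 1)) ^ 2 / q 0 ^ 2 - a ^ 2 * q 0 ^ (2 * k) + b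
  have hF : (fun w => I1 w - J1 w) = fun w =>
      ∑ i, w.1 i * ![fun q => 2 * c * q 0 ^ (n - 1) * cos (n * q 1),
        fun q => -2 * c * q 0 ^ n * sin (n * q 1) / q 0 ^ 2] i w.2 + V w.2 := by
    funext w
    simp only [hI1, hJ1, hptr, hptphi, V, Fin.sum_univ_two, Matrix.cons_val_zero,
      Matrix.cons_val_one]
    ring
  have hG : (fun w => I2 w - J2 w) = fun w => -c * w.2 0 ^ n * sin (n * w.2 1) := by
    funext w
    rw [hI2, hJ2, hptphi]
    ring
  have hV : DifferentiableAt ℝ V z.2 := by fun_prop (disch := simp [hz.ne'])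
  rw [hF, hG]
  exact pbracket_polar_shift_eq_zero c n hz.ne' hV
end
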